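/- arXiv:2204.01199 — 3 statements merged into one kernel-verified Lean document; each statement's English description precedes it below -/
import Mathlib

section
/- Let T be a contraction on a Hilbert space H (‖T‖ ≤ 1) with closure of the range of (T - I) equal to H, and suppose 1 is not an eigenvalue of T. Then the Cayley transform L = -i(T + I)(T - I)^{-1} is a dissipative operator, i.e. Im ⟨L u, u⟩ ≥ 0 for all u in its domain. -/
open scoped InnerProductSpace

/-! The quadratic form of `L` at `u = (T - I)x` is `⟪(T - I)x, -i(T + I)x⟫`, whose imaginary part is
`‖x‖² - ‖Tx‖²` by the identity `Re ⟪a - b, a + b⟫ = ‖a‖² - ‖b‖²`; this is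
nonnegative because `T` is a contraction. -/

theorem re_inner_sub_add {𝕜 E : Type*} [RCLike 𝕜] [SeminormedAddCommGroup E]
    [InnerProductSpace 𝕜 E] (x y : E) :
    RCLike.re ⟪x - y, x + y⟫_𝕜 = ‖x‖ ^ 2 - ‖y‖ ^ 2 := by
  simp only [inner_sub_left, inner_add_right, map_add, map_sub, inner_re_symm y x,
    inner_self_eq_norm_sq]
  ring

theorem Complex.im_inner_neg_I_smul {E : Type*} [SeminormedAddCommGroup E]
    [InnerProductSpace ℂ E] (x y : E) :
    (⟪x, (-Complex.I) • y⟫_ℂ).im = -(⟪x, y⟫_ℂ).re := by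
  simp [inner_smul_right]

theorem cayley_transform_dissipative_general {H : Type*} [NormedAddCommGroup H]
    [InnerProductSpace ℂ H]
    (T : H →L[ℂ] H) (hT : ‖T‖ ≤ 1) :
    ∀ x : H, 0 ≤ (inner ℂ ((T x - x : H)) ((-Complex.I) • (T x + x)) : ℂ).im := by
  intro x
  have hcontr : ‖T x‖ ≤ ‖x‖ := by simpa using T.le_of_opNorm_le hT x
  rw [Complex.im_inner_neg_I_smul, ← RCLike.re_to_complex, re_inner_sub_add,
    neg_sub, sub_nonneg]
  gcongr

/-- If `T` is a contraction on a Hilbert space `H` with `closure (ran (T - I)) = H`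
and `1` is not an eigenvalue of `T`, then the Cayley transform `L = -i(T+I)(T-I)⁻¹`, defined on
`ran (T - I)` by `L ((T-I)x) = -i(T+I)x`, is dissipative: `Im ⟨Lu, u⟩ ≥ 0` for all `u ∈ dom L`. -/
theorem cayley_transform_dissipative {H : Type*} [NormedAddCommGroup H]
    [InnerProductSpace ℂ H] [CompleteSpace H]
    (T : H →L[ℂ] H) (hT : ‖T‖ ≤ 1)
    (hran : closure (Set.range fun x => T x - x) = (Set.univ : Set H))
    (hker : ∀ x : H, T x = x → x = 0) :
    ∀ x : H, 0 ≤ (inner ℂ ((T x - x : H)) ((-Complex.I) • (T x + x)) : ℂ).im :=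
  cayley_transform_dissipative_general T hT
end

section
/- Let A₀ be a self-adjoint, boundedly invertible operator on a Hilbert space H, and Π : E → H a bounded operator from a Hilbert space E with a left inverse Γ̃₀ (Γ̃₀Π = I_E) and dom A₀ ∩ ran Π = {0}. Define A and Γ₀ on dom A₀ ∔ ran Π by A(A₀^{-1}g + Πψ) := g and Γ₀(A₀^{-1}g + Πψ) := ψ. Then for every z ∈ ρ(A₀), every f ∈ H and every φ ∈ E, the vector u = (A₀ - z)^{-1}f + (I - zA₀^{-1})^{-1}Πφ satisfies u ∈ dom A₀ ∔ ran Π, (A - z)u = f and Γ₀u = φ; moreover u = 0 implies f = 0 and φ = 0. -/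
/-- abstract boundary value problem.  The self-adjoint boundedly invertible
operator `A₀` is encoded by its bounded self-adjoint injective inverse `R = A₀⁻¹`; `P = Π` is
bounded with a left inverse `Gt = Γ̃₀` and `dom A₀ ∩ ran Π = ran R ∩ ran Π = {0}`; `S` is a
two-sided inverse of `(I - zR)` (i.e. `z ∈ ρ(A₀)`).  Then
`u = (A₀ - z)⁻¹ f + (I - zA₀⁻¹)⁻¹ Π φ = R (S f) + S (Π φ)` lies in `dom A₀ ∔ ran Π`,
solves `(A - z)u = f`, `Γ₀ u = φ` (i.e. `u = R g + Π φ` with `g = A u = f + z u`),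
and `u = 0` implies `f = 0` and `φ = 0`. -/
theorem abstract_BVP_solution
    {H E : Type*} [NormedAddCommGroup H] [InnerProductSpace ℂ H] [CompleteSpace H]
    [NormedAddCommGroup E] [InnerProductSpace ℂ E] [CompleteSpace E]
    (R : H →L[ℂ] H) (hRsa : IsSelfAdjoint R) (hRinj : Function.Injective R)
    (P : E →L[ℂ] H) (Gt : H →L[ℂ] E) (hleft : ∀ φ : E, Gt (P φ) = φ)
    (htriv : ∀ (f : H) (φ : E), R f = P φ → R f = 0)
    (z : ℂ) (S : H →L[ℂ] H)
    (hS1 : S * (1 - z • R) = 1) (hS2 : (1 - z • R) * S = 1)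
    (f : H) (φ : E) :
    letI u : H := R (S f) + S (P φ)
    (∃ (g : H) (ψ : E), u = R g + P ψ ∧ g = f + z • u ∧ ψ = φ) ∧
      (u = 0 → f = 0 ∧ φ = 0) := by
  set u : H := R (S f) + S (P φ) with hudef
  -- From hS2: S x = x + z • R (S x)
  have h2 : ∀ x : H, S x = x + z • R (S x) := by
    intro x
    have := ContinuousLinearMap.ext_iff.mp hS2 x
    simp only [ContinuousLinearMap.mul_apply, ContinuousLinearMap.sub_apply,
      ContinuousLinearMap.one_apply, ContinuousLinearMap.smul_apply] at this
    linear_combination (norm := abel_nf) this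
  have hu : u = R (f + z • u) + P φ := by
    rw [hudef]
    have hSf := h2 f
    have hSP := h2 (P φ)
    have : R (f + z • u) = R f + z • (R (R (S f)) + R (S (P φ))) := by
      simp [u, map_add, map_smul]
    rw [this]
    calc R (S f) + S (P φ)
        = R (f + z • R (S f)) + (P φ + z • R (S (P φ))) := by rw [← hSf, ← hSP]
      _ = R f + z • (R (R (S f)) + R (S (P φ))) + P φ := by
          simp [map_add, map_smul, smul_add]; abel
  constructor
  · exact ⟨f + z • u, φ, hu, rfl, rfl⟩
  · intro hu0
    have hu' : (0:H) = R f + P φ := by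
      have h := hu; rw [hu0] at h; simpa using h
    have h0 : R f = 0 := by
      refine htriv f (-φ) ?_
      rw [map_neg, eq_neg_iff_add_eq_zero]
      exact hu'.symm
    have hP0 : P φ = 0 := by
      rw [h0] at hu'; simpa using hu'.symm
    have hφ : φ = 0 := by
      have := hleft φ; rw [hP0] at this; simpa using this.symm
    have hf : f = 0 := hRinj (by rw [h0, map_zero])
    exact ⟨hf, hφ⟩
end

section
/- In the setting of the boundary value problem {A₀, Π} above, let Λ be a self-adjoint operator on E and define Γ₁(A₀^{-1}f + Πφ) := Π*f + Λφ for f ∈ H, φ ∈ dom Λ. Then the Green formula ⟨Au, v⟩_H - ⟨u, Av⟩_H = ⟨Γ₁u, Γ₀v⟩_E - ⟨Γ₀u, Γ₁v⟩_E holds for all u, v ∈ 𝒟 := {A₀^{-1}f + Πφ : f ∈ H, φ ∈ dom Λ}. -/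
theorem abstract_BVP_green_formula_general
    {H E : Type*} [NormedAddCommGroup H] [InnerProductSpace ℂ H] [CompleteSpace H]
    [NormedAddCommGroup E] [InnerProductSpace ℂ E] [CompleteSpace E]
    (R : H →L[ℂ] H) (hRsa : IsSelfAdjoint R)
    (P : E →L[ℂ] H)
    (DL : Submodule ℂ E) (Lam : DL →ₗ[ℂ] E)
    (hLam : ∀ φ ψ : DL, (inner ℂ (Lam φ) ((ψ : E)) : ℂ) = inner ℂ ((φ : E)) (Lam ψ)) :
    ∀ (f g : H) (φ ψ : DL),
      letI u : H := R f + P (φ : E)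
      letI v : H := R g + P (ψ : E)
      (inner ℂ f v : ℂ) - inner ℂ u g =
        (inner ℂ (P.adjoint f + Lam φ) ((ψ : E)) : ℂ) -
          inner ℂ ((φ : E)) (P.adjoint g + Lam ψ) := by
  intro f g φ ψ
  simp only [inner_add_left, inner_add_right, ContinuousLinearMap.adjoint_inner_left,
    ContinuousLinearMap.adjoint_inner_right, hLam φ ψ]
  rw [← ContinuousLinearMap.coe_coe R, ← hRsa.isSymmetric f g]
  ring

/-- Green's formula for the abstract boundary value problem.  With `A₀` encoded
via its inverse `R`, `Π = P`, a self-adjoint operator `Λ = Lam` on `dom Λ = DL ⊆ E`, and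
`A u = f`, `Γ₀ u = φ`, `Γ₁ u = Π* f + Λ φ` for `u = R f + Π φ` with `φ ∈ dom Λ`:
`⟨Au, v⟩ - ⟨u, Av⟩ = ⟨Γ₁u, Γ₀v⟩ - ⟨Γ₀u, Γ₁v⟩` for all `u, v ∈ 𝒟`. -/
theorem abstract_BVP_green_formula
    {H E : Type*} [NormedAddCommGroup H] [InnerProductSpace ℂ H] [CompleteSpace H]
    [NormedAddCommGroup E] [InnerProductSpace ℂ E] [CompleteSpace E]
    (R : H →L[ℂ] H) (hRsa : IsSelfAdjoint R) (hRinj : Function.Injective R)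
    (P : E →L[ℂ] H) (Gt : H →L[ℂ] E) (hleft : ∀ φ : E, Gt (P φ) = φ)
    (htriv : ∀ (f : H) (φ : E), R f = P φ → R f = 0)
    (DL : Submodule ℂ E) (Lam : DL →ₗ[ℂ] E)
    (hLam : ∀ φ ψ : DL, (inner ℂ (Lam φ) ((ψ : E)) : ℂ) = inner ℂ ((φ : E)) (Lam ψ)) :
    ∀ (f g : H) (φ ψ : DL),
      letI u : H := R f + P (φ : E)
      letI v : H := R g + P (ψ : E)
      (inner ℂ f v : ℂ) - inner ℂ u g =
        (inner ℂ (P.adjoint f + Lam φ) ((ψ : E)) : ℂ) -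
          inner ℂ ((φ : E)) (P.adjoint g + Lam ψ) :=
  abstract_BVP_green_formula_general R hRsa P DL Lam hLam
end
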